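/- arXiv:1709.01963 — 2 statements merged into one kernel-verified Lean document; each statement's English description precedes it below -/
import Mathlib

section
/- Let A > 1. (i) For every real σ > 1/2 there exists a constant c_{A,σ} such that for every prime power q, every integer n ≥ 2 and every z ∈ ℂ with |z| ≤ A, Σ_{0≤a≤n} |B_z(a)|·q^{−σa} ≤ c_{A,σ}. (ii) There exists a constant c_A such that for every prime power q, every n ≥ 2 and every |z| ≤ A, Σ_{0≤a≤n} |B_z(a)|·q^{−a/2} ≤ n^{c_A}. (iii) There exists a constant C_A such that for every prime power q and every |z| ≤ A, Σ_{a≥0} |B_z(a)|·q^{−a}·a^{2A+2} ≤ C_A. -/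
/-!
For `|z| ≤ m` one has `|b_z(p^k)| ≤ (m+1)·C(k+m, m)` and `b_z(p) = 0`, so for `0 ≤ x ≤ 3/4` the
local factor `Σ_k |b_z(p^k)| x^k` is at most `exp (K_m x²)`. By unique factorization, with
`u = q^{-σ}`,
`Σ_{a ≤ N} |B_z(a)| u^a ≤ Σ_{deg f ≤ N} |b_z(f)| u^{deg f} ≤ ∏_{deg p ≤ N} exp (K_m u^{2 deg p})`,
and since there are at most `q^d / d` monic irreducibles of degree `d`, the exponent is at most
`K_m Σ_{d ≤ N} q^{(1-2σ)d} / d`. For `σ > 1/2` this is bounded by a geometric series, for `σ = 1/2`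
it is the harmonic sum `≤ 1 + log N`, and (iii) follows from the case `σ = 3/4`, the spare factor
`q^{-a/4} ≤ 2^{-a/4}` absorbing `a^{2A+2}`.
-/

open Polynomial UniqueFactorizationMonoid
open scoped Classical

noncomputable section

/-- `cbinom w n = (1/n!)·∏_{j=0}^{n-1} (w - j)`, the generalized binomial coefficient. -/
def cbinom (w : ℂ) (n : ℕ) : ℂ :=
  (∏ j ∈ Finset.range n, (w - (j : ℂ))) / (Nat.factorial n : ℂ)

/-- `bcoef z k`: the coefficient of `S^k` in `(1 + zS)·(1-S)^z`, using that the coefficient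
of `S^k` in `(1-S)^z` is `(-1)^k·cbinom z k`. -/
def bcoef (z : ℂ) : ℕ → ℂ
  | 0 => 1
  | (k + 1) => z * ((-1 : ℂ) ^ k * cbinom z k) + (-1 : ℂ) ^ (k + 1) * cbinom z (k + 1)

/-- `b_z`, the multiplicative function on monic polynomials whose values on powers of a monic
irreducible `p` are the power series coefficients of `(1 + zS)·(1-S)^z`. -/
def bzf {F : Type} [Field F] (z : ℂ) (f : Polynomial F) : ℂ :=
  ∏ p ∈ (normalizedFactors f).toFinset,
    bcoef z (Multiset.count p (normalizedFactors f))

/-- `B_z(n) = Σ_{f monic, deg f = n} b_z(f)`. -/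
def Bz (F : Type) [Field F] (z : ℂ) (n : ℕ) : ℂ :=
  ∑ᶠ f ∈ {f : Polynomial F | f.Monic ∧ f.natDegree = n}, bzf z f

lemma cbinom_succ (z : ℂ) (k : ℕ) : cbinom z (k + 1) = cbinom z k * (z - k) / (k + 1) := by
  rw [cbinom, cbinom, Finset.prod_range_succ, Nat.factorial_succ]
  push_cast
  field_simp

lemma norm_cbinom_le {z : ℂ} {m : ℕ} (hz : ‖z‖ ≤ m) (k : ℕ) :
    ‖cbinom z k‖ ≤ (k + m).choose m := by
  induction k with
  | zero => simp [cbinom]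
  | succ k ih =>
    have hzk : ‖z - k‖ ≤ k + m := by
      simpa [add_comm] using (norm_sub_le z k).trans (add_le_add_left hz _)
    have hchoose : ((k + 1 + m).choose m : ℝ) * (k + 1) = (k + m).choose m * (k + m + 1) := by
      have := Nat.choose_mul_succ_eq (k + m) m
      rw [show k + m + 1 - m = k + 1 by omega, show k + m + 1 = k + 1 + m by omega] at this
      rw [show (k : ℝ) + m + 1 = ((k + 1 + m : ℕ) : ℝ) by push_cast; ring]
      exact_mod_cast this.symm
    have hk : ‖(k : ℂ) + 1‖ = k + 1 := by exact_mod_cast Complex.norm_natCast (k + 1)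
    rw [cbinom_succ, norm_div, norm_mul, hk, div_le_iff₀ (by positivity), hchoose]
    calc ‖cbinom z k‖ * ‖z - k‖ ≤ (k + m).choose m * (k + m) :=
          mul_le_mul ih hzk (norm_nonneg _) (by positivity)
      _ ≤ (k + m).choose m * (k + m + 1) :=
          mul_le_mul_of_nonneg_left (by linarith) (by positivity)

lemma bcoef_zero (z : ℂ) : bcoef z 0 = 1 := rfl

lemma bcoef_one (z : ℂ) : bcoef z 1 = 0 := by
  simp [bcoef, cbinom]

lemma norm_bcoef_le {z : ℂ} {m : ℕ} (hz : ‖z‖ ≤ m) (k : ℕ) :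
    ‖bcoef z k‖ ≤ (m + 1) * (k + m).choose m := by
  cases k with
  | zero => simp [bcoef_zero]
  | succ k =>
    have hmono : ((k + m).choose m : ℝ) ≤ (k + 1 + m).choose m := by
      exact_mod_cast Nat.choose_le_choose m (by omega)
    calc ‖bcoef z (k + 1)‖ ≤ ‖z‖ * ‖cbinom z k‖ + ‖cbinom z (k + 1)‖ := by
          simpa [bcoef] using norm_add_le (z * ((-1) ^ k * cbinom z k))
            ((-1) ^ (k + 1) * cbinom z (k + 1))
      _ ≤ m * (k + m).choose m + (k + 1 + m).choose m :=
          add_le_add (mul_le_mul hz (norm_cbinom_le hz k) (norm_nonneg _) (by positivity))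
            (norm_cbinom_le hz (k + 1))
      _ ≤ (m + 1) * (k + 1 + m).choose m := by nlinarith

lemma sum_norm_bcoef_mul_pow_le {z : ℂ} {m : ℕ} (hz : ‖z‖ ≤ m) {r : ℝ} (hr0 : 0 ≤ r)
    (hr1 : r < 1) (N : ℕ) :
    ∑ k ∈ Finset.range N, ‖bcoef z k‖ * r ^ k ≤ (m + 1) / (1 - r) ^ (m + 1) := by
  have hr : ‖r‖ < 1 := by rwa [Real.norm_of_nonneg hr0]
  calc ∑ k ∈ Finset.range N, ‖bcoef z k‖ * r ^ k
      ≤ ∑ k ∈ Finset.range N, (m + 1) * ((k + m).choose m * r ^ k) :=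
        Finset.sum_le_sum fun k _ => by
          rw [← mul_assoc]; gcongr; exact norm_bcoef_le hz k
    _ = (m + 1) * ∑ k ∈ Finset.range N, (k + m).choose m * r ^ k := by rw [Finset.mul_sum]
    _ ≤ (m + 1) * ∑' k, (k + m).choose m * r ^ k := by
        gcongr
        exact Summable.sum_le_tsum _ (fun k _ => by positivity)
          (summable_choose_mul_geometric_of_norm_lt_one m hr)
    _ = (m + 1) / (1 - r) ^ (m + 1) := by
        rw [tsum_choose_mul_geometric_of_norm_lt_one m hr, mul_one_div]

lemma sum_norm_bcoef_mul_pow_le_exp {z : ℂ} {m : ℕ} (hz : ‖z‖ ≤ m) {r x : ℝ} (hr0 : 0 < r)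
    (hr1 : r < 1) (hx0 : 0 ≤ x) (hxr : x ≤ r) (N : ℕ) :
    ∑ k ∈ Finset.range N, ‖bcoef z k‖ * x ^ k ≤
      Real.exp ((m + 1) / (r ^ 2 * (1 - r) ^ (m + 1)) * x ^ 2) := by
  have hterm : ∀ k, ‖bcoef z k‖ * x ^ k ≤
      (if k = 0 then 1 else 0) + (x / r) ^ 2 * (‖bcoef z k‖ * r ^ k) := by
    rintro (_ | _ | k)
    · simp [bcoef_zero]; positivity
    · simp [bcoef_one]
    · have hxk : x ^ k ≤ r ^ k := pow_le_pow_left₀ hx0 hxr k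
      have : x ^ (k + 2) ≤ (x / r) ^ 2 * r ^ (k + 2) := by
        rw [div_pow, pow_add, pow_add, mul_comm (r ^ k), ← mul_assoc,
          div_mul_cancel₀ _ (by positivity), mul_comm]
        gcongr
      simp only [add_eq_zero, one_ne_zero, and_false, if_false, zero_add]
      calc ‖bcoef z (k + 2)‖ * x ^ (k + 2)
          ≤ ‖bcoef z (k + 2)‖ * ((x / r) ^ 2 * r ^ (k + 2)) := by gcongr
        _ = _ := by ring
  have hone : ∑ k ∈ Finset.range N, (if k = 0 then (1 : ℝ) else 0) ≤ 1 := by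
    rw [Finset.sum_ite_eq']; split_ifs <;> norm_num
  calc ∑ k ∈ Finset.range N, ‖bcoef z k‖ * x ^ k
      ≤ 1 + (x / r) ^ 2 * ((m + 1) / (1 - r) ^ (m + 1)) := by
        refine (Finset.sum_le_sum fun k _ => hterm k).trans ?_
        rw [Finset.sum_add_distrib, ← Finset.mul_sum]
        gcongr
        exact sum_norm_bcoef_mul_pow_le hz hr0.le hr1 N
    _ = (m + 1) / (r ^ 2 * (1 - r) ^ (m + 1)) * x ^ 2 + 1 := by
        field_simp; ring
    _ ≤ _ := Real.add_one_le_exp _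

section Factorization

variable {F : Type*} [Field F]

lemma Polynomial.Monic.prod_normalizedFactors {f : F[X]} (hf : f.Monic) :
    (normalizedFactors f).prod = f := by
  simpa [hf.leadingCoeff] using leadingCoeff_mul_prod_normalizedFactors f

lemma Polynomial.Monic.natDegree_eq_sum_count {f : F[X]} (hf : f.Monic) :
    f.natDegree = ∑ p ∈ (normalizedFactors f).toFinset,
      (normalizedFactors f).count p * p.natDegree := by
  conv_lhs => rw [← hf.prod_normalizedFactors]
  rw [natDegree_multiset_prod _ (zero_notMem_normalizedFactors f),
    Finset.sum_multiset_map_count]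
  rfl

lemma Polynomial.Monic.eq_of_normalizedFactors_eq {f g : F[X]} (hf : f.Monic) (hg : g.Monic)
    (h : normalizedFactors f = normalizedFactors g) : f = g := by
  rw [← hf.prod_normalizedFactors, ← hg.prod_normalizedFactors, h]

lemma norm_bzf_mul_pow_natDegree {F : Type} [Field F] {f : F[X]} (hf : f.Monic) (z : ℂ)
    (u : ℝ) :
    ‖bzf z f‖ * u ^ f.natDegree = ∏ p ∈ (normalizedFactors f).toFinset,
      ‖bcoef z ((normalizedFactors f).count p)‖ *
        u ^ ((normalizedFactors f).count p * p.natDegree) := by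
  rw [bzf, norm_prod, hf.natDegree_eq_sum_count, ← Finset.prod_pow_eq_pow_sum,
    Finset.prod_mul_distrib]

lemma finite_setOf_monic_natDegree_le (F : Type*) [Field F] [Finite F] (N : ℕ) :
    {f : F[X] | f.Monic ∧ f.natDegree ≤ N}.Finite := by
  have : Finite (degreeLT F (N + 1)) := .of_equiv _ (degreeLTEquiv F (N + 1)).toEquiv.symm
  refine (Set.toFinite (degreeLT F (N + 1) : Set F[X])).subset fun f hf => ?_
  rw [SetLike.mem_coe, mem_degreeLT]
  exact degree_le_natDegree.trans_lt (by exact_mod_cast Nat.lt_succ_of_le hf.2)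

lemma Polynomial.Monic.count_normalizedFactors_le_natDegree {f : F[X]} (hf : f.Monic) (p : F[X]) :
    (normalizedFactors f).count p ≤ f.natDegree := by
  by_cases hp : p ∈ (normalizedFactors f).toFinset
  · have hdeg : 0 < p.natDegree :=
      (irreducible_of_normalized_factor p (Multiset.mem_toFinset.1 hp)).natDegree_pos
    calc (normalizedFactors f).count p ≤ (normalizedFactors f).count p * p.natDegree :=
          Nat.le_mul_of_pos_right _ hdeg
      _ ≤ f.natDegree := by
          rw [hf.natDegree_eq_sum_count]
          exact Finset.single_le_sum (f := fun q => (normalizedFactors f).count q * q.natDegree)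
            (fun _ _ => Nat.zero_le _) hp
  · rw [Multiset.count_eq_zero.2 (mt Multiset.mem_toFinset.2 hp)]
    exact Nat.zero_le _

variable [Finite F]

def monicDegLE (F : Type*) [Field F] [Finite F] (N : ℕ) : Finset F[X] :=
  (finite_setOf_monic_natDegree_le F N).toFinset

lemma mem_monicDegLE {N : ℕ} {f : F[X]} : f ∈ monicDegLE F N ↔ f.Monic ∧ f.natDegree ≤ N :=
  Set.Finite.mem_toFinset _

lemma toFinset_normalizedFactors_subset {N : ℕ} {f : F[X]} (hf : f ∈ monicDegLE F N) :
    (normalizedFactors f).toFinset ⊆ (monicDegLE F N).filter Irreducible := by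
  intro p hp
  obtain ⟨hfm, hfN⟩ := mem_monicDegLE.1 hf
  obtain ⟨hirr, hpm, hdvd⟩ :=
    (Polynomial.mem_normalizedFactors_iff hfm.ne_zero).1 (Multiset.mem_toFinset.1 hp)
  exact Finset.mem_filter.2
    ⟨mem_monicDegLE.2 ⟨hpm, (natDegree_le_of_dvd hdvd hfm.ne_zero).trans hfN⟩, hirr⟩

/-- Euler product inequality: a monic `f` of degree `≤ N` is determined by the multiplicities of
the monic irreducibles of degree `≤ N` in it, and each multiplicity is at most `N`. -/
theorem sum_monicDegLE_prod_le_prod_sum (N : ℕ) (g : F[X] → ℕ → ℝ) (hg0 : ∀ p, g p 0 = 1)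
    (hg : ∀ p k, 0 ≤ g p k) :
    ∑ f ∈ monicDegLE F N,
        ∏ p ∈ (normalizedFactors f).toFinset, g p ((normalizedFactors f).count p)
      ≤ ∏ p ∈ (monicDegLE F N).filter Irreducible, ∑ k ∈ Finset.range (N + 1), g p k := by
  set P := (monicDegLE F N).filter Irreducible
  let Φ : F[X] → P → ℕ := fun f p => (normalizedFactors f).count (p : F[X])
  have hprod : ∀ f ∈ monicDegLE F N, ∏ p ∈ (normalizedFactors f).toFinset,
      g p ((normalizedFactors f).count p) = ∏ p : P, g p (Φ f p) := by
    intro f hf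
    rw [Finset.prod_coe_sort P (fun p => g p ((normalizedFactors f).count p))]
    refine Finset.prod_subset (toFinset_normalizedFactors_subset hf) fun p _ hp => ?_
    rw [Multiset.count_eq_zero.2 (mt Multiset.mem_toFinset.2 hp), hg0]
  have hinj : Set.InjOn Φ (monicDegLE F N) := by
    intro f hf f' hf' hΦ
    refine (mem_monicDegLE.1 hf).1.eq_of_normalizedFactors_eq (mem_monicDegLE.1 hf').1 ?_
    ext p
    by_cases hp : p ∈ P
    · exact congrFun hΦ (⟨p, hp⟩ : P)
    · have hnot : ∀ {h}, h ∈ monicDegLE F N → p ∉ normalizedFactors h := fun hh hpmem =>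
        hp (toFinset_normalizedFactors_subset hh (Multiset.mem_toFinset.2 hpmem))
      rw [Multiset.count_eq_zero.2 (hnot hf), Multiset.count_eq_zero.2 (hnot hf')]
  have himage : (monicDegLE F N).image Φ ⊆ Fintype.piFinset fun _ => Finset.range (N + 1) := by
    simp only [Finset.image_subset_iff, Fintype.mem_piFinset, Finset.mem_range, Nat.lt_succ_iff]
    intro f hf p
    show (normalizedFactors f).count (p : F[X]) ≤ N
    obtain ⟨hfm, hfN⟩ := mem_monicDegLE.1 hf
    exact (hfm.count_normalizedFactors_le_natDegree p).trans hfN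
  calc ∑ f ∈ monicDegLE F N, ∏ p ∈ (normalizedFactors f).toFinset,
        g p ((normalizedFactors f).count p)
      = ∑ φ ∈ (monicDegLE F N).image Φ, ∏ p : P, g p (φ p) := by
        rw [Finset.sum_image hinj]; exact Finset.sum_congr rfl hprod
    _ ≤ ∑ φ ∈ Fintype.piFinset fun _ => Finset.range (N + 1), ∏ p : P, g p (φ p) :=
        Finset.sum_le_sum_of_subset_of_nonneg himage fun _ _ _ =>
          Finset.prod_nonneg fun _ _ => hg _ _
    _ = ∏ p ∈ P, ∑ k ∈ Finset.range (N + 1), g p k := by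
        rw [Finset.sum_prod_piFinset, Finset.prod_coe_sort P (fun p => ∑ k ∈ _, g p k)]

end Factorization

section Counting

variable {F : Type*} [Field F] [Fintype F]

/-- Distinct monic irreducibles of degree `d` are coprime divisors of `X ^ q ^ d - X`. -/
theorem card_mul_le_of_monic_irreducible {d : ℕ} (Q : Finset F[X])
    (hQ : ∀ p ∈ Q, p.Monic ∧ Irreducible p ∧ p.natDegree = d) :
    Q.card * d ≤ Fintype.card F ^ d := by
  rcases Nat.eq_zero_or_pos d with rfl | hd
  · simp
  have hq : 1 < Fintype.card F := Fintype.one_lt_card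
  have hcoprime : (Q : Set F[X]).Pairwise (Function.onFun IsCoprime id) := by
    intro p hp r hr hne
    obtain ⟨hpm, hpirr, -⟩ := hQ p hp
    obtain ⟨hrm, hrirr, -⟩ := hQ r hr
    exact hpirr.coprime_iff_not_dvd.2 fun hdvd =>
      hne (eq_of_monic_of_associated hpm hrm (hpirr.associated_of_dvd hrirr hdvd))
  have hdvd : ∏ p ∈ Q, p ∣ (X ^ Fintype.card F ^ d - X : F[X]) := by
    refine Finset.prod_dvd_of_coprime hcoprime fun p hp => ?_
    obtain ⟨-, hirr, hdeg⟩ := hQ p hp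
    rw [Fintype.card_eq_nat_card, ← hdeg]
    exact hirr.natDegree_dvd_iff_dvd_X_pow_card_pow_sub_X.1 dvd_rfl
  calc Q.card * d = (∏ p ∈ Q, p).natDegree := by
        rw [natDegree_prod _ _ fun p hp => (hQ p hp).2.1.ne_zero,
          Finset.sum_congr rfl fun p hp => (hQ p hp).2.2, Finset.sum_const, smul_eq_mul]
    _ ≤ (X ^ Fintype.card F ^ d - X : F[X]).natDegree :=
        natDegree_le_of_dvd hdvd (FiniteField.X_pow_card_pow_sub_X_ne_zero F hd.ne' hq)
    _ = Fintype.card F ^ d := FiniteField.X_pow_card_pow_sub_X_natDegree_eq F hd.ne' hq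

lemma sum_irreducible_monicDegLE_le (N : ℕ) (h : ℕ → ℝ) (hh : ∀ d, 0 ≤ h d) :
    ∑ p ∈ (monicDegLE F N).filter Irreducible, h p.natDegree ≤
      ∑ d ∈ Finset.Icc 1 N, (Fintype.card F : ℝ) ^ d / d * h d := by
  have hmaps : ∀ p ∈ (monicDegLE F N).filter Irreducible, p.natDegree ∈ Finset.Icc 1 N := by
    intro p hp
    obtain ⟨hpN, hirr⟩ := Finset.mem_filter.1 hp
    exact Finset.mem_Icc.2 ⟨hirr.natDegree_pos, (mem_monicDegLE.1 hpN).2⟩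
  rw [← Finset.sum_fiberwise_of_maps_to hmaps]
  refine Finset.sum_le_sum fun d hd => ?_
  set Q := ((monicDegLE F N).filter Irreducible).filter fun p => p.natDegree = d
  have hcard : (Q.card : ℝ) ≤ (Fintype.card F : ℝ) ^ d / d := by
    have hd : (0 : ℝ) < d := by exact_mod_cast (Finset.mem_Icc.1 hd).1
    rw [le_div_iff₀ hd]
    exact_mod_cast card_mul_le_of_monic_irreducible Q fun p hp => by
      simp only [Q, Finset.mem_filter, mem_monicDegLE] at hp
      exact ⟨hp.1.1.1, hp.1.2, hp.2⟩
  calc ∑ p ∈ Q, h p.natDegree = Q.card * h d := by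
        rw [Finset.sum_congr rfl fun p hp => by rw [(Finset.mem_filter.1 hp).2],
          Finset.sum_const, nsmul_eq_mul]
    _ ≤ (Fintype.card F : ℝ) ^ d / d * h d := by gcongr; exact hh d

end Counting

section Bz

variable {F : Type} [Field F] [Fintype F]

lemma Bz_eq_sum_filter {N a : ℕ} (ha : a ≤ N) (z : ℂ) :
    Bz F z a = ∑ f ∈ (monicDegLE F N).filter (fun f => f.natDegree = a), bzf z f := by
  have hset : {f : F[X] | f.Monic ∧ f.natDegree = a} =
      ↑((monicDegLE F N).filter fun f => f.natDegree = a) := by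
    ext f
    simp only [Set.mem_ofPred_eq, Finset.coe_filter, mem_monicDegLE]
    constructor
    · rintro ⟨hf, rfl⟩; exact ⟨⟨hf, ha⟩, rfl⟩
    · rintro ⟨⟨hf, -⟩, rfl⟩; exact ⟨hf, rfl⟩
  rw [Bz, hset, finsum_mem_coe_finset]

lemma sum_norm_Bz_mul_pow_le_sum_monicDegLE (z : ℂ) {u : ℝ} (hu : 0 ≤ u) (N : ℕ) :
    ∑ a ∈ Finset.range (N + 1), ‖Bz F z a‖ * u ^ a ≤
      ∑ f ∈ monicDegLE F N, ‖bzf z f‖ * u ^ f.natDegree := by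
  have hmaps : ∀ f ∈ monicDegLE F N, f.natDegree ∈ Finset.range (N + 1) := fun f hf =>
    Finset.mem_range_succ_iff.2 (mem_monicDegLE.1 hf).2
  rw [← Finset.sum_fiberwise_of_maps_to hmaps]
  refine Finset.sum_le_sum fun a ha => ?_
  rw [Bz_eq_sum_filter (Finset.mem_range_succ_iff.1 ha)]
  calc ‖∑ f ∈ (monicDegLE F N).filter (fun f => f.natDegree = a), bzf z f‖ * u ^ a
      ≤ (∑ f ∈ (monicDegLE F N).filter (fun f => f.natDegree = a), ‖bzf z f‖) * u ^ a := by
        gcongr; exact norm_sum_le _ _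
    _ = _ := by
        rw [Finset.sum_mul]
        exact Finset.sum_congr rfl fun f hf => by rw [(Finset.mem_filter.1 hf).2]

/-- The constant of `sum_norm_bcoef_mul_pow_le_exp` at `r = 3/4`, which suffices because
`q u² ≤ 1` and `q ≥ 2` force `u ≤ 3/4`. -/
def localFactorConst (m : ℕ) : ℝ := (m + 1) / ((3 / 4) ^ 2 * (1 - 3 / 4) ^ (m + 1))

lemma localFactorConst_nonneg (m : ℕ) : 0 ≤ localFactorConst m := by
  unfold localFactorConst; positivity

theorem sum_norm_Bz_mul_pow_le {z : ℂ} {m : ℕ} (hz : ‖z‖ ≤ m) {u : ℝ} (hu : 0 ≤ u)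
    (hqu : Fintype.card F * u ^ 2 ≤ 1) (N : ℕ) :
    ∑ a ∈ Finset.range (N + 1), ‖Bz F z a‖ * u ^ a ≤
      Real.exp (localFactorConst m *
        ∑ d ∈ Finset.Icc 1 N, ((Fintype.card F : ℝ) * u ^ 2) ^ d / d) := by
  have hq : (2 : ℝ) ≤ Fintype.card F := by exact_mod_cast Fintype.one_lt_card (α := F)
  have hu34 : u ≤ 3 / 4 := by nlinarith
  have hlocal : ∀ p ∈ (monicDegLE F N).filter Irreducible,
      ∑ k ∈ Finset.range (N + 1), ‖bcoef z k‖ * u ^ (k * p.natDegree) ≤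
        Real.exp (localFactorConst m * (u ^ p.natDegree) ^ 2) := by
    intro p hp
    have hdeg : p.natDegree ≠ 0 := (Finset.mem_filter.1 hp).2.natDegree_pos.ne'
    simp only [pow_mul']
    exact sum_norm_bcoef_mul_pow_le_exp hz (by norm_num) (by norm_num) (by positivity)
      ((pow_le_of_le_one hu (by linarith) hdeg).trans hu34) _
  calc ∑ a ∈ Finset.range (N + 1), ‖Bz F z a‖ * u ^ a
      ≤ ∑ f ∈ monicDegLE F N, ‖bzf z f‖ * u ^ f.natDegree :=
        sum_norm_Bz_mul_pow_le_sum_monicDegLE z hu N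
    _ ≤ ∏ p ∈ (monicDegLE F N).filter Irreducible,
          ∑ k ∈ Finset.range (N + 1), ‖bcoef z k‖ * u ^ (k * p.natDegree) := by
        rw [Finset.sum_congr rfl fun f hf =>
          norm_bzf_mul_pow_natDegree (mem_monicDegLE.1 hf).1 z u]
        exact sum_monicDegLE_prod_le_prod_sum N (fun p k => ‖bcoef z k‖ * u ^ (k * p.natDegree))
          (fun p => by simp [bcoef_zero]) (fun p k => by positivity)
    _ ≤ ∏ p ∈ (monicDegLE F N).filter Irreducible,
          Real.exp (localFactorConst m * (u ^ p.natDegree) ^ 2) :=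
        Finset.prod_le_prod (fun p _ => by positivity) hlocal
    _ = Real.exp (localFactorConst m *
          ∑ p ∈ (monicDegLE F N).filter Irreducible, (u ^ p.natDegree) ^ 2) := by
        rw [← Real.exp_sum, Finset.mul_sum]
    _ ≤ Real.exp (localFactorConst m *
          ∑ d ∈ Finset.Icc 1 N, ((Fintype.card F : ℝ) * u ^ 2) ^ d / d) := by
        gcongr
        · exact localFactorConst_nonneg m
        refine (sum_irreducible_monicDegLE_le N (fun d => (u ^ d) ^ 2) fun d => by positivity).trans
          (le_of_eq (Finset.sum_congr rfl fun d _ => ?_))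
        ring

lemma rpow_card_le_two_rpow {x : ℝ} (hx : x ≤ 0) : (Fintype.card F : ℝ) ^ x ≤ 2 ^ x :=
  Real.rpow_le_rpow_of_nonpos two_pos (by exact_mod_cast Fintype.one_lt_card (α := F)) hx

theorem sum_norm_Bz_mul_rpow_le {z : ℂ} {m : ℕ} (hz : ‖z‖ ≤ m) {σ : ℝ} (hσ : 1 / 2 ≤ σ)
    (N : ℕ) :
    ∑ a ∈ Finset.range (N + 1), ‖Bz F z a‖ * (Fintype.card F : ℝ) ^ (-(σ * a)) ≤
      Real.exp (localFactorConst m * ∑ d ∈ Finset.Icc 1 N, ((2 : ℝ) ^ (1 - 2 * σ)) ^ d / d) := by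
  set q : ℝ := (Fintype.card F : ℝ)
  have hq : 0 < q := by positivity
  have hu : ∀ a : ℕ, q ^ (-(σ * a)) = (q ^ (-σ)) ^ a := fun a => by
    rw [← Real.rpow_natCast, ← Real.rpow_mul hq.le]; ring_nf
  have hqu : q * (q ^ (-σ)) ^ 2 = q ^ (1 - 2 * σ) := by
    rw [← hu 2, show 1 - 2 * σ = 1 + -(σ * (2 : ℕ)) by push_cast; ring, Real.rpow_add hq,
      Real.rpow_one]
  have hqu2 : q * (q ^ (-σ)) ^ 2 ≤ 2 ^ (1 - 2 * σ) := hqu ▸ rpow_card_le_two_rpow (by linarith)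
  simp only [hu]
  refine (sum_norm_Bz_mul_pow_le hz (by positivity) (hqu2.trans ?_) N).trans ?_
  · exact Real.rpow_le_one_of_one_le_of_nonpos one_le_two (by linarith)
  gcongr with d
  exact localFactorConst_nonneg m

lemma sum_Icc_pow_div_le_inv_one_sub {t : ℝ} (ht0 : 0 ≤ t) (ht1 : t < 1) (N : ℕ) :
    ∑ d ∈ Finset.Icc 1 N, t ^ d / d ≤ (1 - t)⁻¹ :=
  calc ∑ d ∈ Finset.Icc 1 N, t ^ d / d ≤ ∑ d ∈ Finset.Icc 1 N, t ^ d :=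
        Finset.sum_le_sum fun d hd =>
          div_le_self (by positivity) (by exact_mod_cast (Finset.mem_Icc.1 hd).1)
    _ ≤ ∑' d, t ^ d :=
        Summable.sum_le_tsum _ (fun d _ => by positivity) (summable_geometric_of_lt_one ht0 ht1)
    _ = (1 - t)⁻¹ := tsum_geometric_of_lt_one ht0 ht1

theorem sum_norm_Bz_mul_rpow_le_of_half_lt {z : ℂ} {m : ℕ} (hz : ‖z‖ ≤ m) {σ : ℝ}
    (hσ : 1 / 2 < σ) (N : ℕ) :
    ∑ a ∈ Finset.range (N + 1), ‖Bz F z a‖ * (Fintype.card F : ℝ) ^ (-(σ * a)) ≤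
      Real.exp (localFactorConst m * (1 - (2 : ℝ) ^ (1 - 2 * σ))⁻¹) := by
  refine (sum_norm_Bz_mul_rpow_le hz hσ.le N).trans ?_
  gcongr
  · exact localFactorConst_nonneg m
  exact sum_Icc_pow_div_le_inv_one_sub (by positivity)
    (Real.rpow_lt_one_of_one_lt_of_neg one_lt_two (by linarith)) N

lemma exp_mul_one_add_log_le_rpow {K : ℝ} (hK : 0 ≤ K) {n : ℕ} (hn : 2 ≤ n) :
    Real.exp (K * (1 + Real.log n)) ≤ (n : ℝ) ^ (K / Real.log 2 + K) := by
  have hlog2 : 0 < Real.log 2 := Real.log_pos one_lt_two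
  have hlogn : Real.log 2 ≤ Real.log n := Real.log_le_log two_pos (by exact_mod_cast hn)
  rw [Real.rpow_def_of_pos (by positivity), Real.exp_le_exp]
  have : K ≤ K / Real.log 2 * Real.log n := by
    rw [div_mul_eq_mul_div, le_div_iff₀ hlog2]; exact mul_le_mul_of_nonneg_left hlogn hK
  nlinarith

theorem sum_norm_Bz_mul_rpow_half_le {z : ℂ} {m : ℕ} (hz : ‖z‖ ≤ m) {n : ℕ} (hn : 2 ≤ n) :
    ∑ a ∈ Finset.range (n + 1), ‖Bz F z a‖ * (Fintype.card F : ℝ) ^ (-((a : ℝ) / 2)) ≤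
      (n : ℝ) ^ (localFactorConst m / Real.log 2 + localFactorConst m) := by
  have hharmonic : ∑ d ∈ Finset.Icc 1 n, ((2 : ℝ) ^ (1 - 2 * (1 / 2 : ℝ))) ^ d / d ≤
      1 + Real.log n := by
    have h := harmonic_le_one_add_log n
    rw [harmonic_eq_sum_Icc] at h
    push_cast at h
    simpa using h
  have hhalf : ∀ a : ℕ, -((a : ℝ) / 2) = -(1 / 2 * (a : ℝ)) := fun a => by ring
  simp only [hhalf]
  calc _ ≤ _ := sum_norm_Bz_mul_rpow_le hz le_rfl n
    _ ≤ Real.exp (localFactorConst m * (1 + Real.log n)) := by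
        gcongr; exact localFactorConst_nonneg m
    _ ≤ _ := exp_mul_one_add_log_le_rpow (localFactorConst_nonneg m) hn

lemma summable_pow_mul_rpow {ρ s : ℝ} (hρ0 : 0 ≤ ρ) (hρ1 : ρ < 1) (hs : 0 ≤ s) :
    Summable fun a : ℕ => ρ ^ a * (a : ℝ) ^ s := by
  have hgeom : Summable fun a : ℕ => (a : ℝ) ^ ⌈s⌉₊ * ρ ^ a :=
    summable_pow_mul_geometric_of_norm_lt_one _ (by rwa [Real.norm_of_nonneg hρ0])
  refine Summable.of_nonneg_of_le (fun a => by positivity) (fun a => ?_) hgeom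
  rw [mul_comm]
  gcongr
  rcases Nat.eq_zero_or_pos a with rfl | ha
  · rcases hs.eq_or_lt with rfl | hs
    · simp
    · simp [Real.zero_rpow hs.ne']
  · rw [← Real.rpow_natCast]
    exact Real.rpow_le_rpow_of_exponent_le (by exact_mod_cast ha) (Nat.le_ceil s)

lemma norm_Bz_mul_rpow_mul_rpow_le {z : ℂ} {m : ℕ} (hz : ‖z‖ ≤ m) (s : ℝ) (a : ℕ) :
    ‖Bz F z a‖ * (Fintype.card F : ℝ) ^ (-(a : ℝ)) * (a : ℝ) ^ s ≤
      Real.exp (localFactorConst m * (1 - (2 : ℝ) ^ (1 - 2 * (3 / 4 : ℝ)))⁻¹) *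
        (((2 : ℝ) ^ (-(1 / 4 : ℝ))) ^ a * (a : ℝ) ^ s) := by
  set q : ℝ := (Fintype.card F : ℝ)
  have hq : 0 < q := by positivity
  have hsplit : q ^ (-(a : ℝ)) = q ^ (-(3 / 4 * (a : ℝ))) * q ^ (-(1 / 4) * (a : ℝ)) := by
    rw [← Real.rpow_add hq]; ring_nf
  have hterm : ‖Bz F z a‖ * q ^ (-(3 / 4 * (a : ℝ))) ≤
      Real.exp (localFactorConst m * (1 - (2 : ℝ) ^ (1 - 2 * (3 / 4 : ℝ)))⁻¹) :=
    (Finset.single_le_sum (f := fun b : ℕ => ‖Bz F z b‖ * q ^ (-(3 / 4 * (b : ℝ))))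
      (fun b _ => by positivity) (Finset.self_mem_range_succ a)).trans
      (sum_norm_Bz_mul_rpow_le_of_half_lt hz (by norm_num) a)
  have hspare : q ^ (-(1 / 4) * (a : ℝ)) ≤ ((2 : ℝ) ^ (-(1 / 4 : ℝ))) ^ a := by
    rw [← Real.rpow_natCast, ← Real.rpow_mul two_pos.le]
    exact rpow_card_le_two_rpow (by nlinarith [(Nat.cast_nonneg a : (0 : ℝ) ≤ a)])
  calc ‖Bz F z a‖ * q ^ (-(a : ℝ)) * (a : ℝ) ^ s
      = (‖Bz F z a‖ * q ^ (-(3 / 4 * (a : ℝ)))) * (q ^ (-(1 / 4) * (a : ℝ)) * (a : ℝ) ^ s) := by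
        rw [hsplit]; ring
    _ ≤ _ := by gcongr

end Bz

/-- Proposition 2.5: bounds for the coefficients `B_z(a)` of `F(T, z) = A(T,z)·ζ(T)^{-z}`. -/
theorem Bz_bounds :
    ∀ A : ℝ, 1 < A →
      (∀ σ : ℝ, 1 / 2 < σ → ∃ c : ℝ,
        ∀ (F : Type) [Field F] [Fintype F], ∀ (n : ℕ) (z : ℂ), 2 ≤ n → ‖z‖ ≤ A →
          ∑ a ∈ Finset.range (n + 1),
            ‖Bz F z a‖ * (Fintype.card F : ℝ) ^ (-(σ * (a : ℝ))) ≤ c) ∧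
      (∃ c : ℝ,
        ∀ (F : Type) [Field F] [Fintype F], ∀ (n : ℕ) (z : ℂ), 2 ≤ n → ‖z‖ ≤ A →
          ∑ a ∈ Finset.range (n + 1),
            ‖Bz F z a‖ * (Fintype.card F : ℝ) ^ (-((a : ℝ) / 2)) ≤ (n : ℝ) ^ c) ∧
      (∃ C : ℝ,
        ∀ (F : Type) [Field F] [Fintype F], ∀ z : ℂ, ‖z‖ ≤ A →
          Summable (fun a : ℕ => ‖Bz F z a‖ *
            (Fintype.card F : ℝ) ^ (-(a : ℝ)) * (a : ℝ) ^ (2 * A + 2)) ∧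
          ∑' a : ℕ, ‖Bz F z a‖ *
            (Fintype.card F : ℝ) ^ (-(a : ℝ)) * (a : ℝ) ^ (2 * A + 2) ≤ C) := by
  intro A hA
  have hAm : ∀ {z : ℂ}, ‖z‖ ≤ A → ‖z‖ ≤ ⌈A⌉₊ := fun hz => hz.trans (Nat.le_ceil A)
  refine ⟨fun σ hσ => ⟨_, fun F _ _ n z _ hz => sum_norm_Bz_mul_rpow_le_of_half_lt (hAm hz) hσ n⟩,
    ⟨_, fun F _ _ n z hn hz => sum_norm_Bz_mul_rpow_half_le (hAm hz) hn⟩, ?_⟩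
  set c₀ := Real.exp (localFactorConst ⌈A⌉₊ * (1 - (2 : ℝ) ^ (1 - 2 * (3 / 4 : ℝ)))⁻¹)
  set ρ : ℝ := (2 : ℝ) ^ (-(1 / 4 : ℝ))
  have hρ : ρ < 1 := Real.rpow_lt_one_of_one_lt_of_neg one_lt_two (by norm_num)
  have hmajorant : Summable fun a : ℕ => c₀ * (ρ ^ a * (a : ℝ) ^ (2 * A + 2)) :=
    (summable_pow_mul_rpow (by positivity) hρ (by linarith)).mul_left c₀
  refine ⟨∑' a : ℕ, c₀ * (ρ ^ a * (a : ℝ) ^ (2 * A + 2)), fun F _ _ z hz => ?_⟩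
  have hle := norm_Bz_mul_rpow_mul_rpow_le (F := F) (hAm hz) (2 * A + 2)
  have hsummable := hmajorant.of_nonneg_of_le (fun a => by positivity) hle
  exact ⟨hsummable, hsummable.tsum_le_tsum hle hmajorant⟩
end
end

section
/- Let q be a prime power and let d ∈ 𝔽_q[X] have degree m ≥ 1. Then for every real σ with 1/2 < σ ≤ 1, ∏_{p∈ℐ, p∣d} (1 − q^{−σ·deg p})^{−1} ≤ (2 + 2·log m)^{8·(qm)^{1−σ}}. -/
/-!
Write `x_p = q ^ (-σ deg p)`. Since `x_p ≤ 2 ^ (-1/2) < 17/24`, we have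
`(1 - x_p)⁻¹ ≤ exp (24/7 · x_p)`, so it suffices to bound `∑_{p ∣ d} x_p`. Put
`K = ⌊log_q m⌋ + 1`, so that `q ^ (K - 1) ≤ m < q ^ K`. The monic irreducibles of degree `k`
all divide `X ^ q ^ k - X`, so there are at most `q ^ k / k` of them; hence the prime divisors
of degree `≤ K` contribute at most `q ^ ((1 - σ) K) · H_K ≤ (qm) ^ (1 - σ) · H_K`. A prime
divisor of degree `> K ≥ 1` has `x_p ≤ (deg p / 2) · q ^ (-σ K) ≤ (deg p / 2) · m ^ (-σ)`, and
`∑ deg p ≤ m` bounds their contribution by `m ^ (1 - σ) / 2`. Finally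
`H_K + 1/2 ≤ 7/3 · log (K + 1) ≤ 7/3 · log (2 + 2 log m)`.
-/

open Finset Polynomial UniqueFactorizationMonoid

theorem inv_one_sub_le_exp_div {x c : ℝ} (hx : 0 ≤ x) (hxc : x ≤ c) (hc : c < 1) :
    (1 - x)⁻¹ ≤ Real.exp (x / (1 - c)) := by
  have hx1 : 1 - x ≠ 0 := by linarith
  calc (1 - x)⁻¹ = x / (1 - x) + 1 := by field_simp; ring
    _ ≤ Real.exp (x / (1 - x)) := Real.add_one_le_exp _
    _ ≤ Real.exp (x / (1 - c)) := by gcongr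

theorem prod_inv_one_sub_le_exp_div {ι : Type*} (s : Finset ι) (x : ι → ℝ) {c : ℝ} (hc : c < 1)
    (hx : ∀ i ∈ s, 0 ≤ x i ∧ x i ≤ c) :
    ∏ i ∈ s, (1 - x i)⁻¹ ≤ Real.exp ((∑ i ∈ s, x i) / (1 - c)) := by
  rw [sum_div, Real.exp_sum]
  exact prod_le_prod (fun i hi => inv_nonneg.mpr (by linarith [hx i hi]))
    fun i hi => inv_one_sub_le_exp_div (hx i hi).1 (hx i hi).2 hc

theorem rpow_neg_le_of_two_le_of_half_le {q t : ℝ} (hq : 2 ≤ q) (ht : 1 / 2 ≤ t) :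
    q ^ (-t) ≤ 17 / 24 := by
  have hsqrt : (24 / 17 : ℝ) ≤ √2 := Real.le_sqrt_of_sq_le (by norm_num)
  calc q ^ (-t) ≤ q ^ (-(1 / 2) : ℝ) := Real.rpow_le_rpow_of_exponent_le (by linarith) (by linarith)
    _ ≤ 2 ^ (-(1 / 2) : ℝ) := Real.rpow_le_rpow_of_nonpos two_pos hq (by norm_num)
    _ = (√2)⁻¹ := by rw [Real.rpow_neg zero_le_two, Real.sqrt_eq_rpow]
    _ ≤ 17 / 24 := by rw [inv_le_comm₀ (by positivity) (by norm_num)]; linarith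

theorem harmonic_add_half_le_log {K : ℕ} (hK : 1 ≤ K) :
    (harmonic K : ℝ) + 1 / 2 ≤ 7 / 3 * Real.log (K + 1) := by
  have hlog2 := Real.log_two_gt_d9
  obtain rfl | rfl | hK3 : K = 1 ∨ K = 2 ∨ 3 ≤ K := by omega
  · norm_num [harmonic_succ]
    linarith
  · have hlog3 : 1 < Real.log 3 :=
      (Real.lt_log_iff_exp_lt (by norm_num)).mpr (Real.exp_one_lt_d9.trans (by norm_num))
    norm_num [harmonic_succ]
    linarith
  · have hlog4 : Real.log 4 ≤ Real.log (K + 1) :=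
      Real.log_le_log (by norm_num) (by exact_mod_cast Nat.succ_le_succ hK3)
    have hlog4' : Real.log 4 = 2 * Real.log 2 := by
      rw [show (4 : ℝ) = 2 ^ 2 by norm_num, Real.log_pow, Nat.cast_ofNat]
    have hlogK : Real.log K ≤ Real.log (K + 1) :=
      Real.log_le_log (by positivity) (by linarith)
    linarith [harmonic_le_one_add_log K]

theorem natCast_le_two_mul_log {n m : ℕ} (h : 2 ^ n ≤ m) : (n : ℝ) ≤ 2 * Real.log m := by
  have hlog2 := Real.log_two_gt_d9
  have hlog : n * Real.log 2 ≤ Real.log m := by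
    rw [← Real.log_pow]
    exact Real.log_le_log (by positivity) (by exact_mod_cast h)
  nlinarith [Nat.cast_nonneg (α := ℝ) n]

theorem harmonic_log_add_one_add_half_le {q m : ℕ} (hq : 2 ≤ q) (hm : m ≠ 0) :
    (harmonic (Nat.log q m + 1) : ℝ) + 1 / 2 ≤ 7 / 3 * Real.log (2 + 2 * Real.log m) := by
  have hlog := natCast_le_two_mul_log
    ((Nat.pow_le_pow_left hq _).trans (Nat.pow_log_le_self q hm))
  refine (harmonic_add_half_le_log (Nat.le_add_left 1 _)).trans ?_
  gcongr 7 / 3 * Real.log ?_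
  push_cast
  linarith

section DegreeSums

variable {ι : Type*} (s : Finset ι) (deg : ι → ℕ) {q : ℝ}

theorem sum_filter_inv_pow_le_harmonic (hq : 0 < q) (hdeg : ∀ i ∈ s, deg i ≠ 0)
    (hcount : ∀ k : ℕ, k * (#{i ∈ s | deg i = k} : ℝ) ≤ q ^ k) (K : ℕ) :
    ∑ i ∈ s with deg i ≤ K, (q ^ deg i)⁻¹ ≤ harmonic K := by
  have hmaps : ∀ i ∈ {i ∈ s | deg i ≤ K}, deg i ∈ Icc 1 K := fun i hi => by
    rw [mem_filter] at hi
    exact mem_Icc.mpr ⟨Nat.one_le_iff_ne_zero.mpr (hdeg i hi.1), hi.2⟩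
  rw [harmonic_eq_sum_Icc, Rat.cast_sum, ← sum_fiberwise_of_maps_to hmaps]
  refine sum_le_sum fun k hk => ?_
  have hk0 : (0 : ℝ) < k := by exact_mod_cast (mem_Icc.mp hk).1
  have hfiber : {i ∈ {i ∈ s | deg i ≤ K} | deg i = k} ⊆ {i ∈ s | deg i = k} :=
    filter_subset_filter _ (filter_subset _ _)
  calc ∑ i ∈ {i ∈ {i ∈ s | deg i ≤ K} | deg i = k}, (q ^ deg i)⁻¹
      = #{i ∈ {i ∈ s | deg i ≤ K} | deg i = k} * (q ^ k)⁻¹ := by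
        rw [sum_congr rfl fun i hi => by rw [(mem_filter.mp hi).2], sum_const, nsmul_eq_mul]
    _ ≤ #{i ∈ s | deg i = k} * (q ^ k)⁻¹ := by gcongr
    _ ≤ (k : ℝ)⁻¹ := by
        rw [← div_eq_mul_inv, div_le_iff₀ (by positivity), ← div_eq_inv_mul,
          le_div_iff₀ hk0, mul_comm]
        exact hcount k
    _ = ((k⁻¹ : ℚ) : ℝ) := by push_cast; rfl

variable {σ : ℝ}

theorem sum_filter_rpow_neg_le_harmonic (hq : 1 ≤ q) (hdeg : ∀ i ∈ s, deg i ≠ 0)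
    (hcount : ∀ k : ℕ, k * (#{i ∈ s | deg i = k} : ℝ) ≤ q ^ k) (hσ : σ ≤ 1) (K : ℕ) :
    ∑ i ∈ s with deg i ≤ K, q ^ (-(σ * deg i)) ≤ (q ^ K) ^ (1 - σ) * harmonic K := by
  have hq0 : 0 < q := by linarith
  calc ∑ i ∈ s with deg i ≤ K, q ^ (-(σ * deg i))
      = ∑ i ∈ s with deg i ≤ K, q ^ ((1 - σ) * deg i) * (q ^ deg i)⁻¹ := by
        refine sum_congr rfl fun i _ => ?_
        rw [← Real.rpow_natCast, ← Real.rpow_neg hq0.le, ← Real.rpow_add hq0]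
        ring_nf
    _ ≤ ∑ i ∈ s with deg i ≤ K, (q ^ K) ^ (1 - σ) * (q ^ deg i)⁻¹ := by
        refine sum_le_sum fun i hi => ?_
        rw [← Real.rpow_natCast q K, ← Real.rpow_mul hq0.le, mul_comm (K : ℝ)]
        gcongr
        exact (mem_filter.mp hi).2
    _ ≤ (q ^ K) ^ (1 - σ) * harmonic K := by
        rw [← mul_sum]
        gcongr
        exact sum_filter_inv_pow_le_harmonic s deg hq0 hdeg hcount K

theorem sum_filter_rpow_neg_le_half (hq : 1 ≤ q) {m : ℝ} (hsum : ∑ i ∈ s, (deg i : ℝ) ≤ m)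
    (hσ : 0 ≤ σ) {K : ℕ} (hK : 1 ≤ K) (hm : 0 < m) (hmK : m ≤ q ^ K) :
    ∑ i ∈ s with K < deg i, q ^ (-(σ * deg i)) ≤ m ^ (1 - σ) / 2 := by
  have hq0 : 0 < q := by linarith
  have hterm : ∀ i ∈ {i ∈ s | K < deg i}, q ^ (-(σ * deg i)) ≤ deg i / 2 * m ^ (-σ) := by
    intro i hi
    have hKi : K < deg i := (mem_filter.mp hi).2
    have hKi' : (K : ℝ) ≤ deg i := by exact_mod_cast hKi.le
    calc q ^ (-(σ * deg i)) ≤ (q ^ K) ^ (-σ) := by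
          rw [← Real.rpow_natCast, ← Real.rpow_mul hq0.le]
          exact Real.rpow_le_rpow_of_exponent_le hq (by nlinarith)
      _ ≤ m ^ (-σ) := Real.rpow_le_rpow_of_nonpos hm hmK (by linarith)
      _ ≤ deg i / 2 * m ^ (-σ) := by
          refine le_mul_of_one_le_left (by positivity) ?_
          rw [le_div_iff₀ two_pos, one_mul]
          exact_mod_cast (show 2 ≤ deg i by omega)
  calc ∑ i ∈ s with K < deg i, q ^ (-(σ * deg i))
      ≤ ∑ i ∈ s with K < deg i, deg i / 2 * m ^ (-σ) := sum_le_sum hterm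
    _ ≤ ∑ i ∈ s, deg i / 2 * m ^ (-σ) :=
        sum_le_sum_of_subset_of_nonneg (filter_subset _ _) fun _ _ _ => by positivity
    _ ≤ m / 2 * m ^ (-σ) := by
        rw [← sum_mul, ← sum_div]
        gcongr
    _ = m ^ (1 - σ) / 2 := by
        rw [Real.rpow_sub hm, Real.rpow_neg hm.le, Real.rpow_one]
        ring

theorem sum_rpow_neg_le_mul_harmonic (hq : 1 ≤ q) (hdeg : ∀ i ∈ s, deg i ≠ 0)
    (hcount : ∀ k : ℕ, k * (#{i ∈ s | deg i = k} : ℝ) ≤ q ^ k) {m : ℝ}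
    (hsum : ∑ i ∈ s, (deg i : ℝ) ≤ m) (hσ0 : 0 ≤ σ) (hσ1 : σ ≤ 1) {K : ℕ} (hK : 1 ≤ K)
    (hmK : m ≤ q ^ K) (hKm : q ^ K ≤ q * m) :
    ∑ i ∈ s, q ^ (-(σ * deg i)) ≤ (q * m) ^ (1 - σ) * (harmonic K + 1 / 2) := by
  have hm : 0 < m := pos_of_mul_pos_right ((one_le_pow₀ hq).trans_lt' one_pos |>.trans_le hKm)
    (by linarith)
  have hmqm : m ≤ q * m := le_mul_of_one_le_left hm.le hq
  rw [← sum_filter_add_sum_filter_not s (fun i => deg i ≤ K)]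
  simp only [not_le]
  have hsmall := sum_filter_rpow_neg_le_harmonic s deg hq hdeg hcount hσ1 K
  have hlarge := sum_filter_rpow_neg_le_half s deg hq hsum hσ0 hK hm hmK
  have h1 : (q ^ K) ^ (1 - σ) ≤ (q * m) ^ (1 - σ) := by gcongr
  have h2 : m ^ (1 - σ) ≤ (q * m) ^ (1 - σ) := by gcongr
  have hH : (0 : ℝ) ≤ harmonic K := by exact_mod_cast (harmonic_pos (by omega)).le
  nlinarith

end DegreeSums

namespace Polynomial

theorem isCoprime_of_monic_of_irreducible_of_ne {K : Type*} [Field K] {p r : K[X]}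
    (hp : p.Monic) (hr : r.Monic) (hpi : Irreducible p) (hri : Irreducible r) (hne : p ≠ r) :
    IsCoprime p r :=
  hpi.coprime_iff_not_dvd.mpr fun hdvd =>
    hne (eq_of_monic_of_associated hp hr (hpi.associated_of_dvd hri hdvd))

theorem card_mul_le_card_pow_of_monic_irreducible {F : Type*} [Field F] [Fintype F]
    {T : Finset F[X]} {k : ℕ} (hT : ∀ p ∈ T, p.Monic ∧ Irreducible p ∧ p.natDegree = k) :
    k * #T ≤ Fintype.card F ^ k := by
  rcases eq_or_ne k 0 with rfl | hk
  · simp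
  have hq : 1 < Fintype.card F := Fintype.one_lt_card
  have hdvd : ∏ p ∈ T, p ∣ X ^ Fintype.card F ^ k - X := by
    refine prod_dvd_of_coprime (fun p hp r hr hne => ?_) fun p hp => ?_
    · exact isCoprime_of_monic_of_irreducible_of_ne (hT p hp).1 (hT r hr).1 (hT p hp).2.1
        (hT r hr).2.1 hne
    · rw [← Nat.card_eq_fintype_card, ← (hT p hp).2.1.natDegree_dvd_iff_dvd_X_pow_card_pow_sub_X,
        (hT p hp).2.2]
  have hdeg := natDegree_le_of_dvd hdvd (FiniteField.X_pow_card_pow_sub_X_ne_zero F hk hq)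
  rwa [natDegree_prod _ _ fun p hp => (hT p hp).2.1.ne_zero,
    sum_congr rfl fun p hp => (hT p hp).2.2, sum_const, smul_eq_mul, FiniteField.X_pow_card_pow_sub_X_natDegree_eq F hk hq, mul_comm] at hdeg

theorem sum_natDegree_normalizedFactors_le {K : Type*} [Field K] [DecidableEq K] (d : K[X]) :
    ∑ p ∈ (normalizedFactors d).toFinset, p.natDegree ≤ d.natDegree := by
  rcases eq_or_ne d 0 with rfl | hd
  · simp
  have hdvd : ∏ p ∈ (normalizedFactors d).toFinset, p ∣ d :=
    (Multiset.toFinset_prod_dvd_prod _).trans (prod_normalizedFactors hd).dvd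
  rw [← natDegree_prod _ _ fun p hp =>
    ne_zero_of_mem_normalizedFactors (Multiset.mem_toFinset.mp hp)]
  exact natDegree_le_of_dvd hdvd hd

theorem sum_normalizedFactors_rpow_neg_le {F : Type*} [Field F] [Fintype F]
    [DecidableEq F] {d : F[X]} (hd : d.natDegree ≠ 0) {σ : ℝ} (hσ0 : 0 ≤ σ) (hσ1 : σ ≤ 1) :
    ∑ p ∈ (normalizedFactors d).toFinset, (Fintype.card F : ℝ) ^ (-(σ * p.natDegree)) ≤
      (Fintype.card F * d.natDegree : ℝ) ^ (1 - σ) *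
        (harmonic (Nat.log (Fintype.card F) d.natDegree + 1) + 1 / 2) := by
  have hq : 1 < Fintype.card F := Fintype.one_lt_card
  have hmem : ∀ p ∈ (normalizedFactors d).toFinset, p.Monic ∧ Irreducible p := fun p hp => by
    obtain ⟨hirr, hmon, -⟩ := (Polynomial.mem_normalizedFactors_iff (ne_zero_of_natDegree_gt
      (Nat.pos_of_ne_zero hd))).mp (Multiset.mem_toFinset.mp hp)
    exact ⟨hmon, hirr⟩
  refine sum_rpow_neg_le_mul_harmonic _ _ (by exact_mod_cast hq.le)
    (fun p hp => (hmem p hp).2.natDegree_pos.ne') (fun k => ?_)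
    (by exact_mod_cast sum_natDegree_normalizedFactors_le d) hσ0 hσ1 (Nat.le_add_left 1 _)
    (by exact_mod_cast (Nat.lt_pow_succ_log_self hq _).le) ?_
  · have hcard := card_mul_le_card_pow_of_monic_irreducible
      (T := {p ∈ (normalizedFactors d).toFinset | p.natDegree = k}) fun p hp => by
        rw [mem_filter] at hp
        exact ⟨(hmem p hp.1).1, (hmem p hp.1).2, hp.2⟩
    exact_mod_cast hcard
  · rw [pow_succ, mul_comm]
    exact_mod_cast Nat.mul_le_mul_left _ (Nat.pow_log_le_self _ hd)

end Polynomial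

open scoped Classical in
/-- Lemma 3.7: `∏_{p ∣ d} (1 - q^{-σ·deg p})⁻¹ ≤ (2 + 2·log m)^{8·(qm)^{1-σ}}`, the product
running over the distinct monic irreducible divisors of `d`. -/
theorem prime_divisor_product_bound :
    ∀ (F : Type) [Field F] [Fintype F], ∀ d : Polynomial F, 1 ≤ d.natDegree →
      ∀ σ : ℝ, 1 / 2 < σ → σ ≤ 1 →
        (∏ p ∈ (normalizedFactors d).toFinset,
            (1 - (Fintype.card F : ℝ) ^ (-(σ * (p.natDegree : ℝ))))⁻¹) ≤
          (2 + 2 * Real.log (d.natDegree : ℝ)) ^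
            (8 * ((Fintype.card F : ℝ) * (d.natDegree : ℝ)) ^ (1 - σ)) := by
  intro F _ _ d hd σ hσ hσ1
  have hq : 2 ≤ Fintype.card F := Fintype.one_lt_card
  have hsum := sum_normalizedFactors_rpow_neg_le (by omega : d.natDegree ≠ 0) (by linarith) hσ1
  have hharmonic := harmonic_log_add_one_add_half_le hq (by omega : d.natDegree ≠ 0)
  set A := ((Fintype.card F : ℝ) * d.natDegree) ^ (1 - σ)
  set B := 2 + 2 * Real.log d.natDegree
  have hB : 0 < B := by
    linarith [Real.log_nonneg (show (1 : ℝ) ≤ d.natDegree by exact_mod_cast hd)]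
  have hsmall : ∀ p ∈ (normalizedFactors d).toFinset,
      0 ≤ (Fintype.card F : ℝ) ^ (-(σ * p.natDegree)) ∧
        (Fintype.card F : ℝ) ^ (-(σ * p.natDegree)) ≤ 17 / 24 := fun p hp => by
    have hdeg := (irreducible_of_normalized_factor p (Multiset.mem_toFinset.mp hp)).natDegree_pos
    have hdeg' : (1 : ℝ) ≤ p.natDegree := by exact_mod_cast hdeg
    exact ⟨by positivity, rpow_neg_le_of_two_le_of_half_le (by exact_mod_cast hq) (by nlinarith)⟩
  -- `17 / 24 > 2 ^ (-1 / 2)` is chosen so that `(1 - 17 / 24)⁻¹ * 7 / 3 = 8`.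
  calc _ ≤ Real.exp ((∑ p ∈ (normalizedFactors d).toFinset,
          (Fintype.card F : ℝ) ^ (-(σ * p.natDegree))) / (1 - 17 / 24)) :=
        prod_inv_one_sub_le_exp_div _ _ (by norm_num) hsmall
    _ ≤ Real.exp (Real.log B * (8 * A)) := by
        have := mul_le_mul_of_nonneg_left hharmonic (by positivity : 0 ≤ A)
        gcongr
        rw [div_le_iff₀ (by norm_num)]
        linarith
    _ = B ^ (8 * A) := (Real.rpow_def_of_pos hB _).symm
end
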